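/- For every integer n ≥ 1 and all x, the falling factorial satisfies (x)_n = x(x-1)⋯(x-n+1) = x · B_{n-1}^{(n)}(x) as an identity of polynomials in x, where B_{n-1}^{(n)}(x) is the Bernoulli polynomial of degree n-1 and order n. -/

import Mathlib

/-!
Write `V = t/(e^t - 1)` (Mathlib's `bernoulliPowerSeries`), so that
`B_m^{(α)}(x) = m! [t^m] V^α e^{xt}`. Differentiating `V (e^t - 1) = t` gives
`t V' = V - V² e^t`, and comparing the coefficients of `t^{m+1}` in `t (V^α e^{xt})'` yields
`α B_{m+1}^{(α+1)}(x+1) = (α - m - 1) B_{m+1}^{(α)}(x) + (m+1) x B_m^{(α)}(x)`.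
For `α = m + 1` this is `B_{m+1}^{(m+2)}(x+1) = x B_m^{(m+1)}(x)`, and induction from
`B_0^{(1)} = 1` produces the falling factorial.
-/

/-- The formal power series `e^{ct} = ∑_{m≥0} c^m t^m / m!` over `ℂ`. -/
noncomputable def expPS (c : ℂ) : PowerSeries ℂ :=
  PowerSeries.mk fun m => c ^ m / (m.factorial : ℂ)

open PowerSeries Nat

theorem expPS_eq_rescale_exp (c : ℂ) : expPS c = rescale c (exp ℂ) := by
  ext n
  simp [expPS, coeff_rescale, coeff_exp, div_eq_mul_inv]

theorem expPS_one : expPS 1 = exp ℂ := by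
  simp [expPS_eq_rescale_exp]

theorem expPS_mul_expPS (x y : ℂ) : expPS x * expPS y = expPS (x + y) := by
  simp only [expPS_eq_rescale_exp, exp_mul_exp_eq_exp_add]

theorem derivative_expPS (c : ℂ) : d⁄dX ℂ (expPS c) = C c * expPS c := by
  ext n
  simp only [coeff_derivative, expPS, coeff_mk, coeff_C_mul, factorial_succ, cast_mul]
  field_simp
  push_cast
  ring

section

variable (A : Type*) [CommRing A] [Algebra ℚ A]

theorem X_mul_derivative_bernoulliPowerSeries :
    X * d⁄dX A (bernoulliPowerSeries A) =
      bernoulliPowerSeries A - bernoulliPowerSeries A ^ 2 * exp A := by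
  have h := congrArg (d⁄dX A) (bernoulliPowerSeries_mul_exp_sub_one A)
  rw [Derivation.leibniz, map_sub, derivative_exp, Derivation.map_one_eq_zero, sub_zero,
    derivative_X, smul_eq_mul, smul_eq_mul] at h
  rw [← bernoulliPowerSeries_mul_exp_sub_one A]
  linear_combination bernoulliPowerSeries A * h

theorem X_mul_derivative_bernoulliPowerSeries_pow (α : ℕ) :
    X * d⁄dX A (bernoulliPowerSeries A ^ α) =
      C (α : A) * (bernoulliPowerSeries A ^ α - bernoulliPowerSeries A ^ (α + 1) * exp A) := by
  rcases α with _ | α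
  · simp
  rw [Derivation.leibniz_pow, smul_eq_mul, nsmul_eq_mul, map_natCast, add_tsub_cancel_right]
  linear_combination (↑(α + 1) : A⟦X⟧) * bernoulliPowerSeries A ^ α *
    X_mul_derivative_bernoulliPowerSeries A

end

noncomputable def higherBernoulli (α m : ℕ) (x : ℂ) : ℂ :=
  m ! * coeff m (bernoulliPowerSeries ℂ ^ α * expPS x)

theorem eq_higherBernoulli {B : ℕ → ℕ → ℂ → ℂ} {α : ℕ} {x : ℂ}
    (hB : (expPS 1 - 1) ^ α * mk (fun m => B α m x / (m.factorial : ℂ)) = X ^ α * expPS x)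
    (m : ℕ) : B α m x = higherBernoulli α m x := by
  have hV := bernoulliPowerSeries_mul_exp_sub_one ℂ
  have hE : exp ℂ - 1 ≠ 0 := right_ne_zero_of_mul (hV ▸ X_ne_zero)
  have hgen :
      mk (fun m => B α m x / (m.factorial : ℂ)) = bernoulliPowerSeries ℂ ^ α * expPS x := by
    refine mul_left_cancel₀ (pow_ne_zero α hE) ?_
    rw [← expPS_one, hB, expPS_one, ← hV, mul_pow]
    ring
  have h := congrArg (coeff m) hgen
  rw [coeff_mk, div_eq_iff (cast_ne_zero.mpr m.factorial_ne_zero)] at h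
  rw [higherBernoulli, h, mul_comm]

theorem X_mul_derivative_bernoulliPowerSeries_pow_mul_expPS (α : ℕ) (x : ℂ) :
    X * d⁄dX ℂ (bernoulliPowerSeries ℂ ^ α * expPS x) =
      C (α : ℂ) * (bernoulliPowerSeries ℂ ^ α * expPS x -
          bernoulliPowerSeries ℂ ^ (α + 1) * expPS (x + 1)) +
        C x * X * (bernoulliPowerSeries ℂ ^ α * expPS x) := by
  rw [Derivation.leibniz, smul_eq_mul, smul_eq_mul, derivative_expPS, add_comm x,
    ← expPS_mul_expPS, expPS_one]
  linear_combination expPS x * X_mul_derivative_bernoulliPowerSeries_pow ℂ α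

theorem higherBernoulli_succ_add_one (α m : ℕ) (x : ℂ) :
    α * higherBernoulli (α + 1) (m + 1) (x + 1) =
      (α - (m + 1)) * higherBernoulli α (m + 1) x + (m + 1) * x * higherBernoulli α m x := by
  have h := congrArg (coeff (m + 1)) (X_mul_derivative_bernoulliPowerSeries_pow_mul_expPS α x)
  rw [coeff_succ_X_mul, coeff_derivative, map_add, coeff_C_mul, mul_assoc, coeff_C_mul,
    coeff_succ_X_mul, map_sub] at h
  simp only [higherBernoulli, factorial_succ, cast_mul]
  push_cast
  linear_combination ((m : ℂ) + 1) * m ! * h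

theorem higherBernoulli_one_zero (x : ℂ) : higherBernoulli 1 0 x = 1 := by
  simp [higherBernoulli, expPS, bernoulliPowerSeries]

theorem higherBernoulli_succ_succ_add_one (k : ℕ) (x : ℂ) :
    higherBernoulli (k + 2) (k + 1) (x + 1) = x * higherBernoulli (k + 1) k x := by
  have h := higherBernoulli_succ_add_one (k + 1) k x
  push_cast at h
  rw [sub_self, zero_mul, zero_add, mul_assoc] at h
  exact mul_left_cancel₀ (cast_add_one_ne_zero k) h

theorem mul_higherBernoulli_eq_prod (k : ℕ) (x : ℂ) :
    x * higherBernoulli (k + 1) k x = ∏ i ∈ Finset.range (k + 1), (x - i) := by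
  induction k generalizing x with
  | zero => simp [higherBernoulli_one_zero]
  | succ k ih =>
    obtain ⟨y, rfl⟩ : ∃ y, x = y + 1 := ⟨x - 1, by ring⟩
    rw [Finset.prod_range_succ', higherBernoulli_succ_succ_add_one, ih]
    simp only [cast_add, cast_one, cast_zero, add_sub_add_right_eq_sub, sub_zero]
    ring

/-- For every integer `n ≥ 1` and all `x`,
`(x)_n = x(x-1)⋯(x-n+1) = x · B_{n-1}^{(n)}(x)`, where the Bernoulli polynomials of
order `α` are characterized by `(t/(e^t-1))^α e^{xt} = ∑_m B_m^{(α)}(x) t^m/m!`. -/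
theorem stmt11 (n : ℕ) (hn : 1 ≤ n)
    (B : ℕ → ℕ → ℂ → ℂ)
    (hB : ∀ (α : ℕ) (x : ℂ),
      (expPS 1 - 1) ^ α *
          PowerSeries.mk (fun m => B α m x / (m.factorial : ℂ)) =
        PowerSeries.X ^ α * expPS x) :
    ∀ x : ℂ, ∏ i ∈ Finset.range n, (x - i) = x * B n (n - 1) x := by
  intro x
  obtain ⟨k, rfl⟩ := Nat.exists_eq_add_of_le' hn
  rw [add_tsub_cancel_right, eq_higherBernoulli (hB _ _), mul_higherBernoulli_eq_prod]
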